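/- The Besov covering B(G) of a stratified Lie group (ℝⁿ, *_G) with n > 1 is an almost structured covering with reference sets D₀(G) and D₁(G) and affine maps A_m = diag(2^{(m−1)v₁},…,2^{(m−1)vₙ}) for m ≥ 1 (A₀ = Id), satisfying A_m(D₁(G)) = D_m(G) and ‖T_l^{−1}T_m‖ ≤ 2^{vₙ} whenever D_m(G) ∩ D_l(G) ≠ ∅; moreover B(G) is never structured unless (ℝⁿ, *_G) ≅ (ℝ, +). -/

import Mathlib

/-! The annuli `D_m`, `m ≥ 1`, are the images of `D₁` under the group dilations, which are diagonal
linear maps with entries `2^{(m-1) v_j}`; intersecting annuli have `|m - l| ≤ 1`, whence the bound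
`2^{vₙ}`. The covering is not structured: an affine map `φ` carrying the ball `D₀` onto `D₁` sends
some `y ∈ D₀` to `-φ 0`, hence the midpoint of `0` and `y`, which lies in `D₀` by star-convexity,
to the midpoint of `φ 0` and `-φ 0`, which is `0`; but `D₁` is symmetric and avoids `0`. -/

open MeasureTheory

/-- The dilations of a stratified Lie group realized on `ℝⁿ` in coordinates adapted to the
stratification: coordinate `j` has degree `v j` and scales as `r ^ v j`. -/
def dil {n : ℕ} (v : Fin n → ℕ) (r : ℝ) (x : Fin n → ℝ) : Fin n → ℝ :=
  fun j => r ^ v j * x j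

/-- A stratified Lie group realized on `ℝⁿ` through the exponential map: a Lie group
structure `*_G` on `ℝⁿ` with identity `0`, together with degrees `deg j ≥ 1` of the
coordinates (adapted to the stratification) such that the associated dilations are group
automorphisms. -/
structure StratifiedGroup (n : ℕ) where
  mul : (Fin n → ℝ) → (Fin n → ℝ) → (Fin n → ℝ)
  inv : (Fin n → ℝ) → (Fin n → ℝ)
  mul_assoc' : ∀ x y z, mul (mul x y) z = mul x (mul y z)
  zero_mul' : ∀ x, mul 0 x = x
  mul_zero' : ∀ x, mul x 0 = x
  inv_mul' : ∀ x, mul (inv x) x = 0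
  continuous_mul' : Continuous fun p : (Fin n → ℝ) × (Fin n → ℝ) => mul p.1 p.2
  continuous_inv' : Continuous inv
  deg : Fin n → ℕ
  deg_pos : ∀ j, 1 ≤ deg j
  dil_mul : ∀ r : ℝ, 0 < r → ∀ x y, dil deg r (mul x y) = mul (dil deg r x) (dil deg r y)

/-- The homogeneous dimension `Q = ∑ j deg j` of a stratified group. -/
def StratifiedGroup.Q {n : ℕ} (S : StratifiedGroup n) : ℕ := ∑ j, S.deg j

/-- A homogeneous quasi-norm on a stratified Lie group: a continuous, nonnegative,
`1`-homogeneous (for the dilations), symmetric function vanishing exactly at the identity. -/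
structure IsQuasiNorm {n : ℕ} (S : StratifiedGroup n) (N : (Fin n → ℝ) → ℝ) : Prop where
  continuous : Continuous N
  nonneg : ∀ x, 0 ≤ N x
  homogeneous : ∀ r : ℝ, 0 < r → ∀ x, N (dil S.deg r x) = r * N x
  symm : ∀ x, N (S.inv x) = N x
  eq_zero_iff : ∀ x, N x = 0 ↔ x = 0

/-- The quasi-ball `B(c, R) = {h : ‖c⁻¹ *_G h‖ < R}`. -/
def qBall {n : ℕ} (S : StratifiedGroup n) (N : (Fin n → ℝ) → ℝ)
    (c : Fin n → ℝ) (R : ℝ) : Set (Fin n → ℝ) :=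
  {h | N (S.mul (S.inv c) h) < R}

/-- The homogeneous quasi-norm `‖x‖₂ = (∑ⱼ |xⱼ|^{2/vⱼ})^{1/2}` adapted to the degrees `v`. -/
noncomputable def nrm2 {n : ℕ} (v : Fin n → ℕ) (x : Fin n → ℝ) : ℝ :=
  (∑ j, |x j| ^ ((2 : ℝ) / (v j : ℝ))) ^ ((1 : ℝ) / 2)

/-- The members of the Besov covering `𝓑(G)`: `D₀(G) = B^{‖·‖₂}(0,2)` and, for `m ≥ 1`,
the dyadic annuli `D_m(G) = B^{‖·‖₂}(0, 2^{m+1}) \ closure (B^{‖·‖₂}(0, 2^{m-1}))`. -/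
noncomputable def besovSet {n : ℕ} (S : StratifiedGroup n) (m : ℕ) : Set (Fin n → ℝ) :=
  if m = 0 then {x | nrm2 S.deg x < 2}
  else {x | nrm2 S.deg x < 2 ^ (m + 1)} \ closure {x | nrm2 S.deg x < 2 ^ (m - 1)}

/-- A family of sets in `ℝⁿ` is a structured covering if its members are the images of a
single bounded open reference set under invertible affine maps, with uniform compatibility
of the linear parts on intersecting members, and with shrunken images still covering. -/
def IsStructuredFam {n : ℕ} {I : Type*} (Qc : I → Set (Fin n → ℝ)) : Prop :=
  ∃ P : Set (Fin n → ℝ), IsOpen P ∧ Bornology.IsBounded P ∧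
    ∃ (T : I → (Fin n → ℝ) ≃ₗ[ℝ] (Fin n → ℝ)) (b : I → (Fin n → ℝ)),
      (∀ i, (fun x => T i x + b i) '' P = Qc i) ∧
      (∃ C : ℝ, ∀ i j, (Qc i ∩ Qc j).Nonempty →
        ∀ x : Fin n → ℝ, ‖T j ((T i).symm x)‖ ≤ C * ‖x‖) ∧
      ∃ P' : Set (Fin n → ℝ), IsOpen P' ∧ closure P' ⊆ P ∧
        ⋃ i, (fun x => T i x + b i) '' P' = Set.univ

section Dilation

variable {n : ℕ} (v : Fin n → ℕ)

lemma dil_dil (r s : ℝ) (x : Fin n → ℝ) : dil v r (dil v s x) = dil v (r * s) x := by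
  funext j; simp only [dil, mul_pow]; ring

lemma dil_one (x : Fin n → ℝ) : dil v 1 x = x := by
  funext j; simp [dil]

lemma continuous_dil (r : ℝ) : Continuous (dil v r) :=
  continuous_pi fun j => continuous_const.mul (continuous_apply j)

noncomputable def dilHomeomorph (r : ℝ) (hr : r ≠ 0) : (Fin n → ℝ) ≃ₜ (Fin n → ℝ) where
  toFun := dil v r
  invFun := dil v r⁻¹
  left_inv x := by rw [dil_dil, inv_mul_cancel₀ hr, dil_one]
  right_inv x := by rw [dil_dil, mul_inv_cancel₀ hr, dil_one]
  continuous_toFun := continuous_dil v r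
  continuous_invFun := continuous_dil v r⁻¹

lemma image_dil_diff_closure {r : ℝ} (hr : r ≠ 0) (s t : Set (Fin n → ℝ)) :
    dil v r '' (s \ closure t) = dil v r '' s \ closure (dil v r '' t) := by
  let e := dilHomeomorph v r hr
  change e '' _ = e '' _ \ closure (e '' _)
  rw [Set.image_sdiff e.injective, e.image_closure]

lemma norm_dil_le {r R : ℝ} {d : ℕ} (hr : 0 ≤ r) (hrR : r ≤ R) (hR : 1 ≤ R)
    (hd : ∀ j, v j ≤ d) (x : Fin n → ℝ) : ‖dil v r x‖ ≤ R ^ d * ‖x‖ := by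
  refine (pi_norm_le_iff_of_nonneg (by positivity)).2 fun j => ?_
  rw [dil, norm_mul, norm_pow, Real.norm_of_nonneg hr]
  gcongr
  · exact (pow_le_pow_left₀ hr hrR _).trans (pow_le_pow_right₀ hR (hd j))
  · exact norm_le_pi_norm x j

end Dilation

section HomogeneousNorm

variable {n : ℕ} (v : Fin n → ℕ)

lemma nrm2_neg (x : Fin n → ℝ) : nrm2 v (-x) = nrm2 v x := by
  simp [nrm2]

lemma nrm2_zero (hv : ∀ j, 1 ≤ v j) : nrm2 v (0 : Fin n → ℝ) = 0 := by
  have h : ∀ j : Fin n, |(0 : Fin n → ℝ) j| ^ ((2 : ℝ) / (v j : ℝ)) = 0 := fun j => by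
    have hvj : (v j : ℝ) ≠ 0 := by have := hv j; positivity
    rw [Pi.zero_apply, abs_zero, Real.zero_rpow (div_ne_zero two_ne_zero hvj)]
  rw [nrm2, Finset.sum_congr rfl fun j _ => h j, Finset.sum_const_zero,
    Real.zero_rpow one_half_pos.ne']

lemma nrm2_dil (hv : ∀ j, 1 ≤ v j) {r : ℝ} (hr : 0 < r) (x : Fin n → ℝ) :
    nrm2 v (dil v r x) = r * nrm2 v x := by
  have h : ∀ j : Fin n, |r ^ v j * x j| ^ ((2 : ℝ) / (v j : ℝ))
      = r ^ (2 : ℝ) * |x j| ^ ((2 : ℝ) / (v j : ℝ)) := fun j => by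
    have hvj : (v j : ℝ) ≠ 0 := by have := hv j; positivity
    rw [abs_mul, abs_pow, abs_of_pos hr, Real.mul_rpow (by positivity) (abs_nonneg _),
      ← Real.rpow_natCast r (v j), ← Real.rpow_mul hr.le]
    field_simp
  unfold nrm2 dil
  rw [Finset.sum_congr rfl fun j _ => h j, ← Finset.mul_sum,
    Real.mul_rpow (by positivity) (by positivity), ← Real.rpow_mul hr.le]
  norm_num

lemma nrm2_smul_le (x : Fin n → ℝ) {t : ℝ} (h0 : 0 ≤ t) (h1 : t ≤ 1) :
    nrm2 v (t • x) ≤ nrm2 v x := by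
  refine Real.rpow_le_rpow (by positivity) (Finset.sum_le_sum fun j _ => ?_) (by norm_num)
  rw [Pi.smul_apply, smul_eq_mul, abs_mul, Real.mul_rpow (abs_nonneg _) (abs_nonneg _)]
  exact mul_le_of_le_one_left (by positivity)
    (Real.rpow_le_one (abs_nonneg t) (by rwa [abs_of_nonneg h0]) (by positivity))

lemma starConvex_nrm2_lt (c : ℝ) : StarConvex ℝ 0 {x | nrm2 v x < c} := by
  intro y hy a b _ hb hab
  rw [smul_zero, zero_add]
  exact (nrm2_smul_le v y hb (by linarith)).trans_lt hy

lemma image_dil_nrm2_lt (hv : ∀ j, 1 ≤ v j) {r : ℝ} (hr : 0 < r) (c : ℝ) :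
    dil v r '' {x | nrm2 v x < c} = {x | nrm2 v x < r * c} := by
  ext x
  constructor
  · rintro ⟨y, hy, rfl⟩
    rw [Set.mem_ofPred_eq, nrm2_dil v hv hr]
    exact mul_lt_mul_of_pos_left hy hr
  · intro hx
    refine ⟨dil v r⁻¹ x, ?_, by rw [dil_dil, mul_inv_cancel₀ hr.ne', dil_one]⟩
    rw [Set.mem_ofPred_eq, nrm2_dil v hv (inv_pos.mpr hr), inv_mul_lt_iff₀ hr]
    exact hx

end HomogeneousNorm

theorem AffineMap.zero_mem_image_of_starConvex {E F : Type*} [AddCommGroup E] [Module ℝ E]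
    [AddCommGroup F] [Module ℝ F] (φ : E →ᵃ[ℝ] F) {U : Set E} (hU : StarConvex ℝ 0 U)
    (h0 : 0 ∈ U) (hneg : ∀ x ∈ φ '' U, -x ∈ φ '' U) : (0 : F) ∈ φ '' U := by
  obtain ⟨y, hy, hφy⟩ := hneg _ (Set.mem_image_of_mem φ h0)
  refine ⟨midpoint ℝ 0 y, ?_, by rw [φ.map_midpoint, hφy, midpoint_self_neg]⟩
  simpa [midpoint_eq_smul_add] using hU hy (a := 1 / 2) (b := 1 / 2) (by norm_num) (by norm_num)
    (by norm_num)

theorem not_isStructuredFam_of_starConvex {n : ℕ} {I : Type*} {Qc : I → Set (Fin n → ℝ)}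
    {i j : I} (hi : StarConvex ℝ 0 (Qc i)) (h0i : 0 ∈ Qc i) (hj : ∀ x ∈ Qc j, -x ∈ Qc j)
    (h0j : 0 ∉ Qc j) : ¬ IsStructuredFam Qc := by
  rintro ⟨P, -, -, T, b, himg, -⟩
  let A : I → (Fin n → ℝ) ≃ᵃ[ℝ] (Fin n → ℝ) := fun k =>
    (T k).toAffineEquiv.trans (AffineEquiv.constVAdd ℝ _ (b k))
  have hA : ∀ k, A k '' P = Qc k := fun k => by
    rw [← himg k]; congr 1; funext x; exact add_comm _ _
  have hφ : ((A i).symm.trans (A j)).toAffineMap '' Qc i = Qc j := by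
    rw [← hA i, ← hA j, AffineEquiv.coe_toAffineMap, AffineEquiv.coe_trans, Set.image_comp,
      Set.image_image, Set.image_image]
    simp only [AffineEquiv.symm_apply_apply]
  refine h0j ?_
  rw [← hφ] at hj ⊢
  exact AffineMap.zero_mem_image_of_starConvex _ hi h0i hj

section BesovCovering

variable {n : ℕ} (S : StratifiedGroup n)

lemma besovSet_subset (m : ℕ) : besovSet S m ⊆ {x | nrm2 S.deg x < 2 ^ (m + 1)} := by
  unfold besovSet
  split_ifs with hm
  · simp [hm]
  · exact Set.sdiff_subset

lemma pow_le_nrm2_of_mem_besovSet {m : ℕ} (hm : m ≠ 0) {x : Fin n → ℝ}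
    (hx : x ∈ besovSet S m) : 2 ^ (m - 1) ≤ nrm2 S.deg x := by
  rw [besovSet, if_neg hm] at hx
  exact not_lt.1 fun h => hx.2 (subset_closure h)

lemma le_succ_of_besovSet_inter_nonempty {m l : ℕ} (hm : m ≠ 0)
    (h : (besovSet S m ∩ besovSet S l).Nonempty) : m ≤ l + 1 := by
  obtain ⟨x, hxm, hxl⟩ := h
  have : (2 : ℝ) ^ (m - 1) < 2 ^ (l + 1) :=
    (pow_le_nrm2_of_mem_besovSet S hm hxm).trans_lt (besovSet_subset S l hxl)
  have := (pow_lt_pow_iff_right₀ one_lt_two).1 this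
  omega

lemma image_dil_besovSet {m : ℕ} (hm : m ≠ 0) (k : ℕ) :
    dil S.deg (2 ^ k) '' besovSet S m = besovSet S (m + k) := by
  have h2k : (0 : ℝ) < 2 ^ k := by positivity
  rw [besovSet, besovSet, if_neg hm, if_neg (by omega), image_dil_diff_closure _ h2k.ne',
    image_dil_nrm2_lt _ S.deg_pos h2k, image_dil_nrm2_lt _ S.deg_pos h2k, ← pow_add, ← pow_add,
    show k + (m + 1) = m + k + 1 by omega, show k + (m - 1) = m + k - 1 by omega]

lemma neg_mem_besovSet {m : ℕ} {x : Fin n → ℝ} (hx : x ∈ besovSet S m) : -x ∈ besovSet S m := by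
  have hball : ∀ c : ℝ, Neg.neg ⁻¹' {x | nrm2 S.deg x < c} = {x | nrm2 S.deg x < c} :=
    fun c => by ext; simp [nrm2_neg]
  suffices Neg.neg ⁻¹' besovSet S m = besovSet S m by rwa [← this] at hx
  unfold besovSet
  split_ifs
  · exact hball 2
  · rw [Set.preimage_sdiff, hball]
    exact congrArg _ ((neg_closure _).trans (congrArg closure (hball _)))

lemma zero_notMem_besovSet {m : ℕ} (hm : m ≠ 0) : (0 : Fin n → ℝ) ∉ besovSet S m := fun h => by
  have := pow_le_nrm2_of_mem_besovSet S hm h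
  rw [nrm2_zero _ S.deg_pos] at this
  exact (pow_pos two_pos _).not_ge this

end BesovCovering

/-- For `n > 1` (coordinates ordered with nondecreasing degrees), the Besov
covering is almost structured: the reference sets `D₀(G)`, `D₁(G)` and the diagonal linear
maps `A_m = D^G_{2^{m-1}}` satisfy `A_m(D₁(G)) = D_m(G)` for `m ≥ 1`, with the uniform
compatibility bound `‖T_l⁻¹ T_m‖ ≤ 2^{vₙ}` on intersecting members; but the Besov covering
is not a structured covering. -/
theorem besov_covering_almost_structured {n : ℕ} (hn : 1 < n)
    (S : StratifiedGroup n) (hmono : Monotone S.deg) :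
    (∀ m : ℕ, 1 ≤ m →
      dil S.deg ((2 : ℝ) ^ (m - 1)) '' besovSet S 1 = besovSet S m) ∧
    (∀ m l : ℕ, 1 ≤ m → 1 ≤ l → (besovSet S m ∩ besovSet S l).Nonempty →
      ∀ x : Fin n → ℝ,
        ‖dil S.deg ((2 : ℝ) ^ ((m : ℤ) - 1) / (2 : ℝ) ^ ((l : ℤ) - 1)) x‖
          ≤ 2 ^ (S.deg ⟨n - 1, by omega⟩) * ‖x‖) ∧
    ¬ IsStructuredFam (besovSet S) := by
  refine ⟨fun m hm => ?_, fun m l hm hl hinter x => ?_, ?_⟩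
  · simpa [Nat.add_sub_cancel' hm] using image_dil_besovSet S one_ne_zero (m - 1)
  · have hr : (2 : ℝ) ^ ((m : ℤ) - 1) / 2 ^ ((l : ℤ) - 1) = 2 ^ ((m : ℤ) - l) := by
      rw [← zpow_sub₀ two_ne_zero]; ring_nf
    have hml := le_succ_of_besovSet_inter_nonempty S (by omega) hinter
    rw [hr]
    refine norm_dil_le _ (by positivity) ?_ one_le_two (fun j => hmono ?_) x
    · exact (zpow_le_zpow_right₀ one_le_two (by omega)).trans_eq (zpow_one 2)
    · exact Fin.le_def.2 (Nat.le_sub_one_of_lt j.isLt)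
  · exact not_isStructuredFam_of_starConvex (i := 0) (j := 1)
      (by simpa [besovSet] using starConvex_nrm2_lt S.deg 2)
      (by simp [besovSet, nrm2_zero _ S.deg_pos])
      (fun x => neg_mem_besovSet S) (zero_notMem_besovSet S one_ne_zero)
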